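/- arXiv:1909.07265 — 7 statements merged into one kernel-verified Lean document; each statement's English description precedes it below -/
import Mathlib

section
/- Let S be a set and μ : 𝒫(S) → ℝ any set function, and let n ≥ 1. If I_n(A_1, …, A_n) = 0 for every family A_1, …, A_n of pairwise disjoint subsets of S, then I_{n+1}(A_0, A_1, …, A_n) = 0 for every family A_0, A_1, …, A_n of pairwise disjoint subsets of S. -/
/-!
Merging the first two sets gives the recursion
`I_{n+1}(A₀, A₁, A₂, …) = I_n(A₀ ∪ A₁, A₂, …) − I_n(A₀, A₂, …) − I_n(A₁, A₂, …)` for `n ≥ 1`,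
and all three families on the right are again pairwise disjoint. The recursion is cleanest for the
sum `F` that also runs over the empty index set: prepending a set `X` to a family acts on `F` as a
difference operator, `F(X, B; μ) = F(B; μ(X ∪ ·)) − F(B; μ)`, and applying this twice gives the
recursion for `F`, hence for `I = F − (−1)ⁿ μ ∅`.
-/

open Finset Function

/-- The `n`-th interference function of a set function `μ`:
`Iₙ(A₁, …, Aₙ) = Σ_{∅ ≠ T ⊆ {1,…,n}} (−1)^{n−|T|} μ(⋃_{i∈T} A i)`. -/
def interf {S : Type*} (μ : Set S → ℝ) (n : ℕ) (A : Fin n → Set S) : ℝ :=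
  ∑ T ∈ Finset.univ.powerset.filter (fun T : Finset (Fin n) => T ≠ ∅),
    (-1 : ℝ) ^ (n - T.card) * μ (⋃ i ∈ T, A i)

theorem Finset.powerset_map {α β : Type*} (e : α ↪ β) (s : Finset α) :
    (s.map e).powerset = s.powerset.map (mapEmbedding e).toEmbedding := by
  ext T
  simp only [mem_powerset, subset_map_iff, mem_map, RelEmbedding.coe_toEmbedding,
    mapEmbedding_apply]
  exact exists_congr fun u => and_congr_right fun _ => eq_comm

theorem Fin.sum_finset_succ {M : Type*} [AddCommMonoid M] {m : ℕ}
    (f : Finset (Fin (m + 1)) → M) :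
    ∑ T, f T =
      ∑ t : Finset (Fin m), (f (t.map (Fin.succEmb m)) + f (insert 0 (t.map (Fin.succEmb m)))) := by
  rw [← powerset_univ, Fin.univ_succ, cons_eq_insert, sum_powerset_insert (by simp), powerset_map,
    sum_map, sum_map, ← sum_add_distrib, powerset_univ]
  rfl

section Interference

variable {S : Type*}

def fullInterf (μ : Set S → ℝ) (n : ℕ) (A : Fin n → Set S) : ℝ :=
  ∑ T : Finset (Fin n), (-1 : ℝ) ^ (n - #T) * μ (⋃ i ∈ T, A i)

theorem fullInterf_eq_interf_add (μ : Set S → ℝ) (n : ℕ) (A : Fin n → Set S) :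
    fullInterf μ n A = interf μ n A + (-1 : ℝ) ^ n * μ ∅ := by
  classical
  rw [fullInterf, interf, powerset_univ, filter_ne', ← sum_erase_add _ _ (mem_univ ∅)]
  simp

theorem fullInterf_cons (μ : Set S → ℝ) {m : ℕ} (X : Set S) (B : Fin m → Set S) :
    fullInterf μ (m + 1) (Fin.cons X B) =
      fullInterf (fun Y => μ (X ∪ Y)) m B - fullInterf μ m B := by
  rw [fullInterf, Fin.sum_finset_succ, fullInterf, fullInterf, ← sum_sub_distrib]
  refine sum_congr rfl fun t _ => ?_
  have hcard : #t ≤ m := (card_le_univ t).trans_eq (Fintype.card_fin m)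
  have h0 : (0 : Fin (m + 1)) ∉ t.map (Fin.succEmb m) := by simp
  rw [card_insert_of_notMem h0, card_map, set_biUnion_insert]
  simp only [map_eq_image, set_biUnion_finset_image, Fin.coe_succEmb, Fin.cons_zero, Fin.cons_succ]
  rw [show m + 1 - #t = m - #t + 1 by omega, show m + 1 - (#t + 1) = m - #t by omega, pow_succ]
  ring

theorem fullInterf_cons_cons (μ : Set S → ℝ) {m : ℕ} (X Y : Set S) (B : Fin m → Set S) :
    fullInterf μ (m + 2) (Fin.cons X (Fin.cons Y B)) =
      fullInterf μ (m + 1) (Fin.cons (X ∪ Y) B) - fullInterf μ (m + 1) (Fin.cons X B) -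
        fullInterf μ (m + 1) (Fin.cons Y B) := by
  simp only [fullInterf_cons, Set.union_assoc]
  ring

theorem interf_cons_cons (μ : Set S → ℝ) {m : ℕ} (X Y : Set S) (B : Fin m → Set S) :
    interf μ (m + 2) (Fin.cons X (Fin.cons Y B)) =
      interf μ (m + 1) (Fin.cons (X ∪ Y) B) - interf μ (m + 1) (Fin.cons X B) -
        interf μ (m + 1) (Fin.cons Y B) := by
  have h := fullInterf_cons_cons μ X Y B
  simp only [fullInterf_eq_interf_add, pow_succ] at h
  linarith

end Interference

theorem pairwise_disjoint_fin_cons {α : Type*} [PartialOrder α] [OrderBot α] {m : ℕ} {a : α}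
    {f : Fin m → α} (ha : ∀ i, Disjoint a (f i)) (hf : Pairwise (Disjoint on f)) :
    Pairwise (Disjoint on (Fin.cons a f : Fin (m + 1) → α)) := by
  intro i j hij
  cases i using Fin.cases <;> cases j using Fin.cases
  · exact absurd rfl hij
  · exact ha _
  · exact (ha _).symm
  · exact hf (ne_of_apply_ne Fin.succ hij)

/-- If `Iₙ` vanishes on every family of `n` pairwise disjoint subsets of `S` (with `n ≥ 1`),
then `I_{n+1}` vanishes on every family of `n + 1` pairwise disjoint subsets of `S`. -/
theorem interf_succ_vanishes {S : Type*} (μ : Set S → ℝ) (n : ℕ) (hn : 1 ≤ n)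
    (h : ∀ A : Fin n → Set S,
      (∀ i j, i ≠ j → Disjoint (A i) (A j)) → interf μ n A = 0) :
    ∀ A : Fin (n + 1) → Set S,
      (∀ i j, i ≠ j → Disjoint (A i) (A j)) → interf μ (n + 1) A = 0 := by
  obtain ⟨m, rfl⟩ : ∃ m, n = m + 1 := ⟨n - 1, by omega⟩
  intro A hA
  set B : Fin m → Set S := fun i => A i.succ.succ
  have hB : Pairwise (Disjoint on B) :=
    Pairwise.comp_of_injective hA ((Fin.succ_injective _).comp (Fin.succ_injective _))
  have hB₀ (i : Fin m) : Disjoint (A 0) (B i) := hA _ _ (Fin.succ_ne_zero _).symm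
  have hB₁ (i : Fin m) : Disjoint (A 1) (B i) := hA _ _ (Fin.succ_succ_ne_one i).symm
  have hA_eq : A = Fin.cons (A 0) (Fin.cons (A 1) B) :=
    (Fin.cons_self_tail A).symm.trans (congrArg _ (Fin.cons_self_tail _).symm)
  rw [hA_eq, interf_cons_cons,
    h _ (pairwise_disjoint_fin_cons (fun i => (hB₀ i).union_left (hB₁ i)) hB),
    h _ (pairwise_disjoint_fin_cons hB₀ hB), h _ (pairwise_disjoint_fin_cons hB₁ hB)]
  norm_num
end

section
/- Let S be a set and D : 𝒫(S) × 𝒫(S) → ℂ a set function that is Hermitean, i.e. D(A,B) = conj(D(B,A)) for all A, B ⊆ S, and finitely additive in the first argument on disjoint sets, i.e. D(A ∪ B, C) = D(A,C) + D(B,C) whenever A ∩ B = ∅, for all C ⊆ S. Then the diagonal set function μ(A) = D(A,A) is real-valued and satisfies the grade-2 additivity condition I_3(A,B,C) = 0 for all pairwise disjoint subsets A, B, C of S. -/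
/-- Let `D : 𝒫(S) × 𝒫(S) → ℂ` be Hermitean (`D(A,B) = conj (D(B,A))`) and finitely additive
in the first argument on disjoint sets. Then the diagonal `μ(A) = D(A,A)` is real-valued and
satisfies the grade-2 additivity condition `I₃(A,B,C) = 0` for pairwise disjoint `A, B, C`. -/
theorem diagonal_of_decoherence_is_grade_two {S : Type*} (D : Set S → Set S → ℂ)
    (hherm : ∀ A B : Set S, D A B = (starRingEnd ℂ) (D B A))
    (hadd : ∀ A B C : Set S, Disjoint A B → D (A ∪ B) C = D A C + D B C) :
    (∀ A : Set S, (D A A).im = 0) ∧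
    (∀ A B C : Set S, Disjoint A B → Disjoint A C → Disjoint B C →
      (D (A ∪ B ∪ C) (A ∪ B ∪ C)).re - (D (A ∪ B) (A ∪ B)).re - (D (A ∪ C) (A ∪ C)).re
          - (D (B ∪ C) (B ∪ C)).re + (D A A).re + (D B B).re + (D C C).re = 0) := by
  have hadd2 : ∀ A B C : Set S, Disjoint B C → D A (B ∪ C) = D A B + D A C := by
    intro A B C h
    rw [hherm, hadd _ _ _ h, map_add, ← hherm, ← hherm]
  have hre : ∀ A B : Set S, (D A B).re = (D B A).re := by
    intro A B; rw [hherm]; simp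
  constructor
  · intro A
    have := hherm A A
    have h2 := congrArg Complex.im this
    simp [Complex.conj_im] at h2
    linarith
  · intro A B C hAB hAC hBC
    have hABC : Disjoint (A ∪ B) C := hAC.union_left hBC
    simp only [hadd _ _ _ hABC, hadd2 _ _ _ hABC, hadd _ _ _ hAB, hadd2 _ _ _ hAB,
      hadd _ _ _ hAC, hadd2 _ _ _ hAC, hadd _ _ _ hBC, hadd2 _ _ _ hBC]
    simp only [Complex.add_re]
    have h1 := hre A B
    have h2 := hre A C
    have h3 := hre B C
    linarith
end

section
/- Let G be a groupoid with finitely many arrows and φ a positive semi-definite function on G. Define the linear functional ρ_φ on complex-valued functions on the arrows of G by ρ_φ(f) = Σ_α f(α) φ(α). Then ρ_φ is positive with respect to the convolution *-algebra structure: for every function f on the arrows of G, ρ_φ(f* ⋆ f) is a nonnegative real number. -/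
open CategoryTheory
open scoped ComplexOrder Classical

universe u

/-- The set of arrows of a groupoid with object type `Ω`. -/
abbrev GArrow (Ω : Type u) [Groupoid Ω] : Type u := Σ x y : Ω, x ⟶ y

namespace GArrow

variable {Ω : Type u} [Groupoid Ω]

/-- Source of an arrow. -/
def src (α : GArrow Ω) : Ω := α.1

/-- Target of an arrow. -/
def tgt (α : GArrow Ω) : Ω := α.2.1

/-- Inverse of an arrow. -/
def inv (α : GArrow Ω) : GArrow Ω := ⟨α.2.1, α.1, Groupoid.inv α.2.2⟩

/-- The identity arrow at an object. -/
def id (x : Ω) : GArrow Ω := ⟨x, x, 𝟙 x⟩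

/-- The composite `α ∘ β` (first apply `β`, then `α`), defined when `t(β) = s(α)`. -/
def comp (α β : GArrow Ω) (h : β.tgt = α.src) : GArrow Ω :=
  ⟨β.1, α.2.1, (β.2.2 ≫ eqToHom h) ≫ α.2.2⟩

/-- The composite `α⁻¹ ∘ β`, defined when `t(α) = t(β)`. -/
def invComp (α β : GArrow Ω) (h : α.tgt = β.tgt) : GArrow Ω :=
  ⟨β.1, α.1, (β.2.2 ≫ eqToHom h.symm) ≫ Groupoid.inv α.2.2⟩

end GArrow

/-- A function on the arrows of a groupoid is positive semi-definite if for all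
`ξ : Fin n → ℂ` and arrows `α : Fin n → GArrow Ω`, the sum over pairs `(i, j)` with
`t(α i) = t(α j)` of `conj (ξ i) * ξ j * φ ((α i)⁻¹ ∘ α j)` is a nonnegative real number. -/
def IsPosSemidefFun {Ω : Type u} [Groupoid Ω] (φ : GArrow Ω → ℂ) : Prop :=
  ∀ (n : ℕ) (ξ : Fin n → ℂ) (α : Fin n → GArrow Ω),
    0 ≤ ∑ i, ∑ j,
      if h : (α i).tgt = (α j).tgt then
        (starRingEnd ℂ) (ξ i) * ξ j * φ (GArrow.invComp (α i) (α j) h)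
      else 0

/-- The convolution product on complex functions on the arrows of a finite groupoid. -/
noncomputable def conv {Ω : Type u} [Groupoid Ω] [Fintype Ω] [∀ x y : Ω, Fintype (x ⟶ y)]
    (f g : GArrow Ω → ℂ) (γ : GArrow Ω) : ℂ :=
  ∑ α : GArrow Ω, ∑ β : GArrow Ω,
    if h : β.tgt = α.src then (if GArrow.comp α β h = γ then f α * g β else 0) else 0

/-- The involution `f*(α) = conj (f (α⁻¹))` on functions on arrows. -/
def starFun {Ω : Type u} [Groupoid Ω] (f : GArrow Ω → ℂ) (α : GArrow Ω) : ℂ :=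
  (starRingEnd ℂ) (f (GArrow.inv α))

/-- The unit of the convolution algebra: the indicator of the set of identity arrows. -/
noncomputable def convOne {Ω : Type u} [Groupoid Ω] (γ : GArrow Ω) : ℂ :=
  if γ = GArrow.id γ.src then 1 else 0

/-- The indicator function of a single arrow. -/
noncomputable def delta {Ω : Type u} [Groupoid Ω] (α : GArrow Ω) (β : GArrow Ω) : ℂ :=
  if β = α then 1 else 0

lemma GArrow.inv_involutive {Ω : Type u} [Groupoid Ω] :
    Function.Involutive (GArrow.inv (Ω := Ω)) := by
  rintro ⟨x, y, g⟩
  simp [GArrow.inv, Groupoid.inv_eq_inv]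

/-- `inv` as an equiv on arrows. -/
def GArrow.invEquiv {Ω : Type u} [Groupoid Ω] : GArrow Ω ≃ GArrow Ω :=
  GArrow.inv_involutive.toPerm

lemma GArrow.comp_inv_eq_invComp {Ω : Type u} [Groupoid Ω] (a b : GArrow Ω)
    (h : b.tgt = a.inv.src) (h' : a.tgt = b.tgt) :
    GArrow.comp a.inv b h = GArrow.invComp a b h' := rfl

/-- For a groupoid with finitely many arrows and a positive semi-definite function `φ`,
the linear functional `ρ_φ(f) = Σ_α f(α) φ(α)` is positive with respect to the convolution
`*`-algebra structure: `ρ_φ(f* ⋆ f)` is a nonnegative real number for every `f`. -/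
theorem rho_of_posSemidef_is_positive {Ω : Type u} [Groupoid Ω] [Fintype Ω]
    [∀ x y : Ω, Fintype (x ⟶ y)]
    (φ : GArrow Ω → ℂ) (hφ : IsPosSemidefFun φ) (f : GArrow Ω → ℂ) :
    0 ≤ ∑ γ : GArrow Ω, conv (starFun f) f γ * φ γ := by
  classical
  have key : ∑ γ : GArrow Ω, conv (starFun f) f γ * φ γ =
      ∑ a : GArrow Ω, ∑ b : GArrow Ω,
        if h : a.tgt = b.tgt then
          (starRingEnd ℂ) (f a) * f b * φ (GArrow.invComp a b h)
        else 0 := by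
    have step1 : ∑ γ : GArrow Ω, conv (starFun f) f γ * φ γ =
        ∑ α : GArrow Ω, ∑ β : GArrow Ω,
          if h : β.tgt = α.src then starFun f α * f β * φ (GArrow.comp α β h)
          else 0 := by
      simp only [conv, Finset.sum_mul]
      rw [Finset.sum_comm]
      refine Finset.sum_congr rfl fun α _ => ?_
      rw [Finset.sum_comm]
      refine Finset.sum_congr rfl fun β _ => ?_
      by_cases h : β.tgt = α.src
      · simp only [h, dif_pos]
        rw [Finset.sum_eq_single (GArrow.comp α β h)]
        · simp [mul_assoc]
        · intro γ _ hγ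
          rw [if_neg (Ne.symm hγ), zero_mul]
        · simp
      · simp [h]
    rw [step1, ← Equiv.sum_comp (GArrow.invEquiv (Ω := Ω))]
    refine Finset.sum_congr rfl fun a _ => Finset.sum_congr rfl fun b _ => ?_
    show (if h : b.tgt = (GArrow.inv a).src then
        starFun f a.inv * f b * φ (GArrow.comp a.inv b h) else 0) = _
    by_cases h : a.tgt = b.tgt
    · have h2 : b.tgt = a.inv.src := h.symm
      rw [dif_pos h2, dif_pos h, GArrow.comp_inv_eq_invComp a b h2 h]
      simp [starFun, GArrow.inv_involutive a]
    · rw [dif_neg (fun hc => h hc.symm), dif_neg h]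
  rw [key]
  have e : Fin (Fintype.card (GArrow Ω)) ≃ GArrow Ω := (Fintype.equivFin _).symm
  have := hφ (Fintype.card (GArrow Ω)) (fun i => f (e i)) (fun i => e i)
  calc (0 : ℂ) ≤ ∑ i, ∑ j,
      if h : (e i).tgt = (e j).tgt then
        (starRingEnd ℂ) (f (e i)) * f (e j) * φ (GArrow.invComp (e i) (e j) h)
      else 0 := this
    _ = _ := by
      rw [← Equiv.sum_comp e (fun a => ∑ b : GArrow Ω,
        if h : a.tgt = b.tgt then
          (starRingEnd ℂ) (f a) * f b * φ (GArrow.invComp a b h) else 0)]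
      exact Finset.sum_congr rfl fun i _ =>
        (Equiv.sum_comp e fun b =>
          if h : (e i).tgt = b.tgt then
            (starRingEnd ℂ) (f (e i)) * f b * φ (GArrow.invComp (e i) b h)
          else 0).symm ▸ rfl
end

section
/- Let G be a groupoid with finitely many arrows and π a ℂ-algebra homomorphism from the convolution algebra of complex-valued functions on the arrows of G to the algebra of n×n complex matrices, satisfying π(f*) = (π(f))ᴴ (conjugate transpose) for all f. Let ρ̂ be an n×n positive semidefinite Hermitian complex matrix. Then the function φ_ρ(α) = Tr(ρ̂ · π(δ_α)) is a positive semi-definite function on G, where δ_α is the indicator function of the arrow α. -/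
open CategoryTheory
open scoped ComplexOrder Classical

universe u

/-! With `M = ∑ ξᵢ π(δ_{αᵢ})`, multiplicativity and `⋆`-compatibility of `π` give
`M⋆ M = ∑ conj ξᵢ ξⱼ π(δ_{αᵢ⁻¹ ∘ αⱼ})`, the terms with `t(αᵢ) ≠ t(αⱼ)` vanishing because
`δ_{αᵢ⁻¹} ⋆ δ_{αⱼ} = 0`. Hence the quadratic form of `φ_ρ` is `Tr(ρ M⋆ M) = Tr(M ρ M⋆) ≥ 0`. -/

open Matrix

namespace GArrow

variable {Ω : Type u} [Groupoid Ω]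

@[simp]
lemma inv_inv (α : GArrow Ω) : α.inv.inv = α := by
  obtain ⟨x, y, f⟩ := α
  simp [inv, Groupoid.inv_eq_inv]

lemma inv_comp (α β : GArrow Ω) (h : α.tgt = β.tgt) : α.inv.comp β h.symm = α.invComp β h :=
  rfl

end GArrow

section Convolution

variable {Ω : Type u} [Groupoid Ω]

lemma starFun_delta (α : GArrow Ω) : starFun (delta α) = delta α.inv := by
  funext β
  have : β.inv = α ↔ β = α.inv := ⟨fun h ↦ by rw [← h, GArrow.inv_inv], fun h ↦ by simp [h]⟩
  simp [starFun, delta, this]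

variable [Fintype Ω] [∀ x y : Ω, Fintype (x ⟶ y)]

lemma conv_delta_delta (α β : GArrow Ω) :
    conv (delta α) (delta β) = if h : β.tgt = α.src then delta (α.comp β h) else 0 := by
  funext γ
  rw [conv, Fintype.sum_eq_single α, Fintype.sum_eq_single β]
  · by_cases h : β.tgt = α.src <;> simp [h, delta, eq_comm]
  · intro β' hβ'
    simp [delta, hβ']
  · intro α' hα'
    simp [delta, hα']

lemma star_map_delta_mul_map_delta {A : Type*} [Semiring A] [Module ℂ A] [Star A]
    (π : (GArrow Ω → ℂ) →ₗ[ℂ] A) (hmul : ∀ f g, π (conv f g) = π f * π g)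
    (hstar : ∀ f, π (starFun f) = star (π f)) (α β : GArrow Ω) :
    star (π (delta α)) * π (delta β) =
      if h : α.tgt = β.tgt then π (delta (α.invComp β h)) else 0 := by
  rw [← hstar, starFun_delta, ← hmul, conv_delta_delta]
  by_cases h : α.tgt = β.tgt
  · rw [dif_pos (show β.tgt = α.inv.src from h.symm), dif_pos h, GArrow.inv_comp]
  · rw [dif_neg (show β.tgt ≠ α.inv.src from Ne.symm h), dif_neg h, map_zero]

end Convolution

lemma star_sum_smul_mul_sum_smul {ι R A : Type*} [CommSemiring R] [StarRing R]
    [NonUnitalNonAssocSemiring A] [StarAddMonoid A] [Module R A] [StarModule R A]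
    [IsScalarTower R A A] [SMulCommClass R A A] (s : Finset ι) (c : ι → R) (x : ι → A) :
    star (∑ i ∈ s, c i • x i) * ∑ j ∈ s, c j • x j =
      ∑ i ∈ s, ∑ j ∈ s, (star (c i) * c j) • (star (x i) * x j) := by
  simp only [star_sum, star_smul, Finset.sum_mul, Finset.mul_sum, smul_mul_smul_comm]
  exact Finset.sum_comm

lemma Matrix.PosSemidef.trace_mul_conjTranspose_mul_self_nonneg {m n R : Type*}
    [Fintype m] [Fintype n] [CommRing R] [PartialOrder R] [StarRing R] [AddLeftMono R]
    {ρ : Matrix n n R} (hρ : ρ.PosSemidef) (M : Matrix m n R) : 0 ≤ (ρ * (Mᴴ * M)).trace := by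
  rw [← Matrix.mul_assoc, trace_mul_comm, ← Matrix.mul_assoc]
  exact (hρ.mul_mul_conjTranspose_same M).trace_nonneg

/-- Let `π` be a `ℂ`-algebra homomorphism from the convolution algebra of a finite groupoid
to `n×n` complex matrices with `π(f*) = (π f).conjTranspose`, and let `ρ̂` be a positive semidefinite
Hermitian matrix. Then `φ_ρ(α) = Tr(ρ̂ · π(δ_α))` is positive semi-definite on the groupoid. -/
theorem trace_state_posSemidef {Ω : Type u} [Groupoid Ω] [Fintype Ω]
    [∀ x y : Ω, Fintype (x ⟶ y)] (n : ℕ)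
    (π : (GArrow Ω → ℂ) →ₗ[ℂ] Matrix (Fin n) (Fin n) ℂ)
    (hmul : ∀ f g : GArrow Ω → ℂ, π (conv f g) = π f * π g)
    (hone : π convOne = 1)
    (hstar : ∀ f : GArrow Ω → ℂ, π (starFun f) = (π f).conjTranspose)
    (ρ : Matrix (Fin n) (Fin n) ℂ) (hρ : ρ.PosSemidef) :
    IsPosSemidefFun (fun α : GArrow Ω => (ρ * π (delta α)).trace) := by
  intro m ξ α
  let M := ∑ i, ξ i • π (delta (α i))
  calc 0 ≤ (ρ * (star M * M)).trace := hρ.trace_mul_conjTranspose_mul_self_nonneg M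
    _ = _ := by
      simp only [M, star_sum_smul_mul_sum_smul, star_map_delta_mul_map_delta π hmul hstar,
        Matrix.mul_sum, trace_sum, Matrix.mul_smul, trace_smul, smul_eq_mul]
      refine Finset.sum_congr rfl fun i _ ↦ Finset.sum_congr rfl fun j _ ↦ ?_
      split_ifs <;> simp
end

section
/- Let G be a groupoid with finitely many arrows and finitely many objects, and let φ : Arr(G) → ℂ be idempotent with respect to the convolution product, i.e., φ ⋆ φ = φ. Then the transition amplitudes φ_{ba} = Σ_{α : a → b} φ(α) satisfy Feynman's composition law (the abstract Chapman–Kolmogorov equation): φ_{a'a} = Σ over all objects a'' of φ_{a'a''} · φ_{a''a}, for all objects a, a' of G. -/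
open CategoryTheory
open scoped ComplexOrder Classical

universe u

/-- If `φ` is idempotent for the convolution product (`φ ⋆ φ = φ`) on a groupoid with
finitely many arrows and objects, then the transition amplitudes
`φ_{ba} = Σ_{α : a → b} φ(α)` satisfy Feynman's composition law (the abstract
Chapman–Kolmogorov equation): `φ_{a'a} = Σ_{a''} φ_{a'a''} · φ_{a''a}`. -/
theorem feynman_composition {Ω : Type u} [Groupoid Ω] [Fintype Ω]
    [∀ x y : Ω, Fintype (x ⟶ y)]
    (φ : GArrow Ω → ℂ) (hφ : ∀ γ : GArrow Ω, conv φ φ γ = φ γ) (a a' : Ω) :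
    (∑ f : a ⟶ a', φ ⟨a, a', f⟩) =
      ∑ a'' : Ω, (∑ f : a'' ⟶ a', φ ⟨a'', a', f⟩) * (∑ f : a ⟶ a'', φ ⟨a, a'', f⟩) := by
  rw [show (∑ f : a ⟶ a', φ ⟨a, a', f⟩) = ∑ f : a ⟶ a', conv φ φ ⟨a, a', f⟩ from Finset.sum_congr rfl fun f _ => (hφ ⟨a, a', f⟩).symm]
  unfold conv
  simp only [← Finset.univ_sigma_univ, Finset.sum_sigma]
  simp only [GArrow.tgt, GArrow.src, GArrow.comp, Finset.sum_dite_irrel, Finset.sum_dite_eq,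
    Finset.sum_dite_eq', Finset.mem_univ, if_true, Sigma.mk.inj_iff, Finset.sum_const_zero]
  simp only [eqToHom_refl, Category.comp_id, ite_and, Finset.sum_ite_irrel,
    Finset.sum_ite_eq', Finset.mem_univ, if_true, heq_eq_eq, Sigma.mk.inj_iff,
    Finset.sum_const_zero]
  rw [Finset.sum_comm]
  refine Finset.sum_congr rfl fun x1 _ => ?_
  rw [Finset.sum_comm]
  rw [Finset.sum_mul]
  refine Finset.sum_congr rfl fun x2 _ => ?_
  rw [Finset.sum_comm, Finset.mul_sum]
  refine Finset.sum_congr rfl fun x3 _ => ?_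
  simp [Finset.sum_ite_eq]
end

section
/- Let G be a connected groupoid with finitely many arrows and a nonempty finite set Ω of objects, and let s be an action on G. Define φ(α) = (|Ω| / |Arr(G)|) · exp(i·s(α)), where |Arr(G)| is the total number of arrows of G. Then φ satisfies the reproducing property φ ⋆ φ = φ with respect to the convolution product. -/
open CategoryTheory
open scoped ComplexOrder Classical

universe u

/-! The convolution square of `c · e^{i s}` at `γ` is a sum over the arrows `β` with the source
of `γ`, each contributing `c² e^{i s(γ β⁻¹)} e^{i s(β)} = c² e^{i s(γ)}` because `s` is additive.
By connectedness every object is the source of the same number `|Arr(G)| / |Ω|` of arrows, and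
`c = |Ω| / |Arr(G)|` is exactly the reciprocal of that number. -/

namespace GArrow

variable {Ω : Type u} [Groupoid Ω]

lemma comp_inv_comp_cancel_right (γ β : GArrow Ω) (h : β.src = γ.src) :
    comp (comp γ β.inv h) β rfl = γ := by
  obtain ⟨x, y, f⟩ := γ
  obtain ⟨x', z, g⟩ := β
  dsimp only [src] at h
  subst h
  dsimp only [comp, inv, src, tgt]
  erw [eqToHom_refl, eqToHom_refl]
  simp

lemma comp_eq_iff_eq_comp_inv (α β γ : GArrow Ω) (h : β.tgt = α.src) :
    comp α β h = γ ↔ ∃ hβ : β.src = γ.src, α = comp γ β.inv hβ := by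
  constructor
  · rintro rfl
    obtain ⟨x, y, f⟩ := α
    obtain ⟨x', z, g⟩ := β
    dsimp only [tgt, src] at h
    subst h
    exact ⟨rfl, by dsimp only [comp, inv, src, tgt]; simp⟩
  · rintro ⟨hβ, rfl⟩
    exact comp_inv_comp_cancel_right γ β hβ

end GArrow

open GArrow

variable {Ω : Type u} [Groupoid Ω] [Fintype Ω] [∀ x y : Ω, Fintype (x ⟶ y)]

theorem conv_apply_eq_sum_src (f g : GArrow Ω → ℂ) (γ : GArrow Ω) :
    conv f g γ = ∑ β : GArrow Ω, if h : β.src = γ.src then f (comp γ β.inv h) * g β else 0 := by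
  rw [conv, Finset.sum_comm]
  refine Fintype.sum_congr _ _ fun β => ?_
  by_cases hβ : β.src = γ.src
  · rw [dif_pos hβ, Finset.sum_eq_single_of_mem _ (Finset.mem_univ (comp γ β.inv hβ))]
    · exact (dif_pos rfl).trans (if_pos (comp_inv_comp_cancel_right γ β hβ))
    · intro α _ hα
      split_ifs with h hc
      · exact absurd ((comp_eq_iff_eq_comp_inv α β γ h).1 hc).2 hα
      all_goals rfl
  · rw [dif_neg hβ]
    refine Finset.sum_eq_zero fun α _ => ?_
    split_ifs with h hc
    · exact absurd ((comp_eq_iff_eq_comp_inv α β γ h).1 hc).1 hβ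
    all_goals rfl

theorem card_filter_src_eq (x : Ω) :
    (Finset.univ.filter fun β : GArrow Ω => β.src = x).card = Fintype.card (Σ y : Ω, x ⟶ y) := by
  rw [← Fintype.card_subtype]
  exact Fintype.card_congr (Equiv.sigmaSubtype x)

theorem conv_const_mul_of_map_comp {χ : GArrow Ω → ℂ}
    (hχ : ∀ α β h, χ (comp α β h) = χ α * χ β) (c : ℂ) (γ : GArrow Ω) :
    conv (fun α => c * χ α) (fun α => c * χ α) γ =
      Fintype.card (Σ y : Ω, γ.src ⟶ y) * c * (c * χ γ) := by
  have hterm : ∀ β (h : β.src = γ.src), c * χ (comp γ β.inv h) * (c * χ β) = c * (c * χ γ) := by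
    intro β h
    rw [mul_mul_mul_comm, ← hχ _ _ rfl, comp_inv_comp_cancel_right, mul_assoc]
  simp only [conv_apply_eq_sum_src, hterm, dite_eq_ite, Finset.sum_ite, Finset.sum_const_zero,
    add_zero, Finset.sum_const, card_filter_src_eq, nsmul_eq_mul, mul_assoc]

theorem card_garrow_eq_card_mul (hconn : ∀ x y : Ω, Nonempty (x ⟶ y)) (x : Ω) :
    Fintype.card (GArrow Ω) = Fintype.card Ω * Fintype.card (Σ y : Ω, x ⟶ y) := by
  rw [Fintype.card_sigma, ← smul_eq_mul, ← Finset.card_univ, ← Finset.sum_const]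
  refine Fintype.sum_congr _ _ fun x' => ?_
  obtain ⟨f⟩ := hconn x x'
  exact Fintype.card_congr
    { toFun := fun p => ⟨p.1, f ≫ p.2⟩
      invFun := fun p => ⟨p.1, Groupoid.inv f ≫ p.2⟩
      left_inv := fun p => by simp
      right_inv := fun p => by simp }

/-- Let `G` be a connected groupoid with finitely many arrows and a nonempty finite set of
objects, and `s` an action on `G`. Then `φ(α) = (|Ω| / |Arr(G)|) · exp(i·s(α))` satisfies
the reproducing property `φ ⋆ φ = φ` for the convolution product. -/
theorem exp_action_reproducing {Ω : Type u} [Groupoid Ω] [Fintype Ω] [Nonempty Ω]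
    [∀ x y : Ω, Fintype (x ⟶ y)]
    (hconn : ∀ x y : Ω, Nonempty (x ⟶ y))
    (s : GArrow Ω → ℝ)
    (h1 : ∀ x : Ω, s (GArrow.id x) = 0)
    (h2 : ∀ (α β : GArrow Ω) (h : β.tgt = α.src),
      s (GArrow.comp α β h) = s α + s β)
    (φ : GArrow Ω → ℂ)
    (hφ : ∀ α : GArrow Ω,
      φ α = ((Fintype.card Ω : ℂ) / (Fintype.card (GArrow Ω) : ℂ)) *
        Complex.exp (Complex.I * (s α : ℂ))) :
    ∀ γ : GArrow Ω, conv φ φ γ = φ γ := by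
  intro γ
  have hexp : ∀ α β h, Complex.exp (Complex.I * (s (comp α β h) : ℂ)) =
      Complex.exp (Complex.I * (s α : ℂ)) * Complex.exp (Complex.I * (s β : ℂ)) := by
    intro α β h
    rw [h2, Complex.ofReal_add, mul_add, Complex.exp_add]
  have hout : (Fintype.card (Σ y : Ω, γ.src ⟶ y) : ℂ) ≠ 0 :=
    Nat.cast_ne_zero.2 (Fintype.card_pos_iff.2 ⟨⟨γ.src, 𝟙 _⟩⟩).ne'
  have hmass : (Fintype.card (Σ y : Ω, γ.src ⟶ y) : ℂ) *
      ((Fintype.card Ω : ℂ) / (Fintype.card (GArrow Ω) : ℂ)) = 1 := by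
    rw [card_garrow_eq_card_mul hconn γ.src]
    push_cast
    field_simp
  rw [funext hφ, conv_const_mul_of_map_comp hexp, hmass, one_mul]
end

section
/- Let G be a connected groupoid with finitely many arrows and a finite nonempty set Ω of objects. Then for every object x of G, the total number of arrows of G equals |Ω| times the number of arrows with source x: |Arr(G)| = |Ω| · |{α ∈ Arr(G) : s(α) = x}|. -/
open CategoryTheory
open scoped ComplexOrder Classical

universe u

theorem CategoryTheory.Iso.card_sigma_hom_eq {C : Type u} [Category C] [Fintype C]
    [∀ x y : C, Fintype (x ⟶ y)] {x z : C} (e : x ≅ z) :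
    Fintype.card (Σ y : C, x ⟶ y) = Fintype.card (Σ y : C, z ⟶ y) :=
  Fintype.card_congr (Equiv.sigmaCongrRight fun y => e.homCongr (Iso.refl y))

/-- For a connected groupoid with finitely many arrows and a finite nonempty set of
objects, the total number of arrows equals the number of objects times the number of
arrows with source any fixed object `x`. -/
theorem card_arrows_eq_card_objects_mul {Ω : Type u} [Groupoid Ω] [Fintype Ω] [Nonempty Ω]
    [∀ x y : Ω, Fintype (x ⟶ y)]
    (hconn : ∀ x y : Ω, Nonempty (x ⟶ y)) (x : Ω) :
    Fintype.card (GArrow Ω) =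
      Fintype.card Ω * Fintype.card {α : GArrow Ω // α.src = x} := by
  have hout : ∀ z : Ω, Fintype.card (Σ y : Ω, z ⟶ y) = Fintype.card (Σ y : Ω, x ⟶ y) :=
    fun z => (Groupoid.isoEquivHom z x |>.symm (hconn z x).some).card_sigma_hom_eq
  calc Fintype.card (GArrow Ω) = ∑ z : Ω, Fintype.card (Σ y : Ω, z ⟶ y) := Fintype.card_sigma
    _ = Fintype.card Ω * Fintype.card (Σ y : Ω, x ⟶ y) := by simp [hout]
    _ = Fintype.card Ω * Fintype.card {α : GArrow Ω // α.src = x} := by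
      congr 1
      exact (Fintype.card_congr (Equiv.sigmaSubtype (β := fun z => Σ y : Ω, z ⟶ y) x)).symm
end
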